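/- arXiv:0909.4830 — 2 statements merged into one kernel-verified Lean document; each statement's English description precedes it below -/
import Mathlib

section
/- Let F be analytic on the upper half plane. Then the function G(z) = (1/((2i)^n n!)) (d/dz)^n [s^n F(z)], where s = Im z and d/dz = (∂_x − i∂_s)/2, satisfies (d/dz̄)^{n+1} G = 0; that is, G is polyanalytic of order n+1. -/
open Complex

/-- Wirtinger derivative `d/dz = (∂_x - i ∂_s)/2` for a function of `(x,s) ∈ ℝ × ℝ`. -/
noncomputable def wdz (F : ℝ × ℝ → ℂ) : ℝ × ℝ → ℂ := fun p =>
  (1 / 2 : ℂ) * (deriv (fun x : ℝ => F (x, p.2)) p.1 -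
    Complex.I * deriv (fun s : ℝ => F (p.1, s)) p.2)

/-- Wirtinger derivative `d/dz̄ = (∂_x + i ∂_s)/2`. -/
noncomputable def wdzbar (F : ℝ × ℝ → ℂ) : ℝ × ℝ → ℂ := fun p =>
  (1 / 2 : ℂ) * (deriv (fun x : ℝ => F (x, p.2)) p.1 +
    Complex.I * deriv (fun s : ℝ => F (p.1, s)) p.2)

namespace Stmt7Aux

def U : Set ℂ := {z : ℂ | 0 < z.im}

lemma isOpen_U : IsOpen U := isOpen_Ioi.preimage Complex.continuous_im

lemma mem_U {p : ℝ × ℝ} (hp : 0 < p.2) : ((p.1 : ℂ) + p.2 * Complex.I) ∈ U := by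
  simp [U, hp]

/-- The model function: a polynomial in `s` with coefficient functions of `z = x + s i`. -/
noncomputable def S (m : ℕ) (c : ℕ → ℂ → ℂ) : ℝ × ℝ → ℂ := fun p =>
  ∑ k ∈ Finset.range (m + 1), (p.2 : ℂ) ^ k * c k ((p.1 : ℂ) + p.2 * Complex.I)

/-- `G` agrees on the upper half plane with a polynomial in `s` of degree `≤ m`
with holomorphic coefficients. -/
def P (m : ℕ) (G : ℝ × ℝ → ℂ) : Prop :=
  ∃ c : ℕ → ℂ → ℂ, (∀ k, DifferentiableOn ℂ (c k) U) ∧ (∀ k, m < k → c k = 0) ∧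
    ∀ p : ℝ × ℝ, 0 < p.2 → G p = S m c p

lemma hasDerivAt_x (c : ℂ → ℂ) (hc : DifferentiableOn ℂ c U) (p : ℝ × ℝ) (hp : 0 < p.2) :
    HasDerivAt (fun x : ℝ => c ((x : ℂ) + p.2 * Complex.I))
      (deriv c ((p.1 : ℂ) + p.2 * Complex.I)) p.1 := by
  set z : ℂ := (p.1 : ℂ) + p.2 * Complex.I with hz
  have hd : DifferentiableAt ℂ c z :=
    hc.differentiableAt (isOpen_U.mem_nhds (mem_U hp))
  have h1 : HasDerivAt c (deriv c z) z := hd.hasDerivAt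
  have h2 : HasDerivAt (fun w : ℂ => w + (p.2 : ℂ) * Complex.I) 1 (p.1 : ℂ) :=
    (hasDerivAt_id _).add_const _
  have h3 : HasDerivAt (fun w : ℂ => c (w + (p.2 : ℂ) * Complex.I)) (deriv c z * 1) (p.1 : ℂ) :=
    HasDerivAt.comp _ (by simpa [hz] using h1) h2
  simpa using h3.comp_ofReal

lemma hasDerivAt_s (c : ℂ → ℂ) (hc : DifferentiableOn ℂ c U) (p : ℝ × ℝ) (hp : 0 < p.2) :
    HasDerivAt (fun s : ℝ => c ((p.1 : ℂ) + s * Complex.I))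
      (deriv c ((p.1 : ℂ) + p.2 * Complex.I) * Complex.I) p.2 := by
  set z : ℂ := (p.1 : ℂ) + p.2 * Complex.I with hz
  have hd : DifferentiableAt ℂ c z :=
    hc.differentiableAt (isOpen_U.mem_nhds (mem_U hp))
  have h1 : HasDerivAt c (deriv c z) z := hd.hasDerivAt
  have h2 : HasDerivAt (fun w : ℂ => (p.1 : ℂ) + w * Complex.I) (1 * Complex.I) (p.2 : ℂ) :=
    ((hasDerivAt_id _).mul_const _).const_add _
  have h3 : HasDerivAt (fun w : ℂ => c ((p.1 : ℂ) + w * Complex.I))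
      (deriv c z * (1 * Complex.I)) (p.2 : ℂ) :=
    HasDerivAt.comp _ (by simpa [hz] using h1) h2
  simpa using h3.comp_ofReal

lemma hasDerivAt_pow_ofReal (k : ℕ) (s : ℝ) :
    HasDerivAt (fun t : ℝ => ((t : ℂ)) ^ k) ((k : ℂ) * (s : ℂ) ^ (k - 1)) s := by
  simpa using (hasDerivAt_pow k ((s : ℂ))).comp_ofReal

lemma deriv_x_S (m : ℕ) (c : ℕ → ℂ → ℂ) (hc : ∀ k, DifferentiableOn ℂ (c k) U)
    (p : ℝ × ℝ) (hp : 0 < p.2) :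
    HasDerivAt (fun x : ℝ => S m c (x, p.2))
      (∑ k ∈ Finset.range (m + 1),
        (p.2 : ℂ) ^ k * deriv (c k) ((p.1 : ℂ) + p.2 * Complex.I)) p.1 := by
  have he : (fun x : ℝ => S m c (x, p.2)) =
      fun x : ℝ => ∑ k ∈ Finset.range (m + 1),
        (p.2 : ℂ) ^ k * c k ((x : ℂ) + p.2 * Complex.I) := rfl
  rw [he]
  exact HasDerivAt.fun_sum fun k _ => (hasDerivAt_x (c k) (hc k) p hp).const_mul _

lemma deriv_s_S (m : ℕ) (c : ℕ → ℂ → ℂ) (hc : ∀ k, DifferentiableOn ℂ (c k) U)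
    (p : ℝ × ℝ) (hp : 0 < p.2) :
    HasDerivAt (fun s : ℝ => S m c (p.1, s))
      (∑ k ∈ Finset.range (m + 1),
        ((k : ℂ) * (p.2 : ℂ) ^ (k - 1) * c k ((p.1 : ℂ) + p.2 * Complex.I) +
          (p.2 : ℂ) ^ k * (deriv (c k) ((p.1 : ℂ) + p.2 * Complex.I) * Complex.I))) p.2 := by
  have he : (fun s : ℝ => S m c (p.1, s)) =
      fun s : ℝ => ∑ k ∈ Finset.range (m + 1),
        (s : ℂ) ^ k * c k ((p.1 : ℂ) + s * Complex.I) := rfl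
  rw [he]
  exact HasDerivAt.fun_sum fun k _ =>
    (hasDerivAt_pow_ofReal k p.2).mul (hasDerivAt_s (c k) (hc k) p hp)

lemma wdz_congr {G H : ℝ × ℝ → ℂ} (h : ∀ p : ℝ × ℝ, 0 < p.2 → G p = H p)
    (p : ℝ × ℝ) (hp : 0 < p.2) : wdz G p = wdz H p := by
  have hx : (fun x : ℝ => G (x, p.2)) = fun x : ℝ => H (x, p.2) :=
    funext fun x => h (x, p.2) hp
  have hs : (fun s : ℝ => G (p.1, s)) =ᶠ[nhds p.2] fun s : ℝ => H (p.1, s) := by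
    filter_upwards [Ioi_mem_nhds hp] with s hs
    exact h (p.1, s) hs
  unfold wdz
  rw [hx, hs.deriv_eq]

lemma wdzbar_congr {G H : ℝ × ℝ → ℂ} (h : ∀ p : ℝ × ℝ, 0 < p.2 → G p = H p)
    (p : ℝ × ℝ) (hp : 0 < p.2) : wdzbar G p = wdzbar H p := by
  have hx : (fun x : ℝ => G (x, p.2)) = fun x : ℝ => H (x, p.2) :=
    funext fun x => h (x, p.2) hp
  have hs : (fun s : ℝ => G (p.1, s)) =ᶠ[nhds p.2] fun s : ℝ => H (p.1, s) := by
    filter_upwards [Ioi_mem_nhds hp] with s hs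
    exact h (p.1, s) hs
  unfold wdzbar
  rw [hx, hs.deriv_eq]

/-- Key reindexing identity. -/
lemma reindex (m : ℕ) (c : ℕ → ℂ → ℂ) (hz : c (m + 1) = 0) (s z : ℂ) :
    ∑ k ∈ Finset.range (m + 1), (Complex.I * (k : ℂ) / 2) * (s ^ (k - 1) * c k z) =
    ∑ k ∈ Finset.range (m + 1), s ^ k * ((Complex.I * ((k : ℂ) + 1) / 2) * c (k + 1) z) := by
  rw [Finset.sum_range_succ' (fun k =>
    (Complex.I * (k : ℂ) / 2) * (s ^ (k - 1) * c k z)) m,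
    Finset.sum_range_succ (fun k =>
    s ^ k * ((Complex.I * ((k : ℂ) + 1) / 2) * c (k + 1) z)) m, hz]
  simp only [Pi.zero_apply, mul_zero, Nat.cast_zero, zero_div, zero_mul, add_zero]
  apply Finset.sum_congr rfl
  intro k _
  push_cast
  ring

lemma wdz_S (m : ℕ) (c : ℕ → ℂ → ℂ) (hc : ∀ k, DifferentiableOn ℂ (c k) U)
    (hz : ∀ k, m < k → c k = 0) (p : ℝ × ℝ) (hp : 0 < p.2) :
    wdz (S m c) p =
      S m (fun k z => deriv (c k) z - (Complex.I * ((k : ℂ) + 1) / 2) * c (k + 1) z) p := by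
  have hA := (deriv_x_S m c hc p hp).deriv
  have hB := (deriv_s_S m c hc p hp).deriv
  have hR : S m (fun k z => deriv (c k) z - (Complex.I * ((k : ℂ) + 1) / 2) * c (k + 1) z) p
      = ∑ k ∈ Finset.range (m + 1),
          ((p.2 : ℂ) ^ k * deriv (c k) ((p.1 : ℂ) + p.2 * Complex.I) -
            (Complex.I * (k : ℂ) / 2) *
              ((p.2 : ℂ) ^ (k - 1) * c k ((p.1 : ℂ) + p.2 * Complex.I))) := by
    unfold S
    rw [Finset.sum_sub_distrib]
    rw [show (∑ k ∈ Finset.range (m + 1), (p.2 : ℂ) ^ k *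
        ((fun k z => deriv (c k) z - (Complex.I * ((k : ℂ) + 1) / 2) * c (k + 1) z) k
          ((p.1 : ℂ) + p.2 * Complex.I))) =
      ∑ k ∈ Finset.range (m + 1),
        ((p.2 : ℂ) ^ k * deriv (c k) ((p.1 : ℂ) + p.2 * Complex.I) -
          (p.2 : ℂ) ^ k * ((Complex.I * ((k : ℂ) + 1) / 2) *
            c (k + 1) ((p.1 : ℂ) + p.2 * Complex.I))) from
      Finset.sum_congr rfl fun k _ => by ring]
    rw [Finset.sum_sub_distrib,
      ← reindex m c (hz (m + 1) (Nat.lt_succ_self m)) ((p.2 : ℂ)) _]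
  rw [hR]
  unfold wdz
  rw [hA, hB, Finset.mul_sum, ← Finset.sum_sub_distrib, Finset.mul_sum]
  refine Finset.sum_congr rfl fun k _ => ?_
  linear_combination (-(1 / 2 : ℂ) * (p.2 : ℂ) ^ k *
    deriv (c k) ((p.1 : ℂ) + p.2 * Complex.I)) * Complex.I_sq

lemma wdzbar_S (m : ℕ) (c : ℕ → ℂ → ℂ) (hc : ∀ k, DifferentiableOn ℂ (c k) U)
    (hz : ∀ k, m < k → c k = 0) (p : ℝ × ℝ) (hp : 0 < p.2) :
    wdzbar (S m c) p =
      S m (fun k z => (Complex.I * ((k : ℂ) + 1) / 2) * c (k + 1) z) p := by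
  have hA := (deriv_x_S m c hc p hp).deriv
  have hB := (deriv_s_S m c hc p hp).deriv
  have hR : S m (fun k z => (Complex.I * ((k : ℂ) + 1) / 2) * c (k + 1) z) p
      = ∑ k ∈ Finset.range (m + 1),
          (Complex.I * (k : ℂ) / 2) *
            ((p.2 : ℂ) ^ (k - 1) * c k ((p.1 : ℂ) + p.2 * Complex.I)) := by
    unfold S
    rw [← reindex m c (hz (m + 1) (Nat.lt_succ_self m)) ((p.2 : ℂ)) _]
  rw [hR]
  unfold wdzbar
  rw [hA, hB, Finset.mul_sum, ← Finset.sum_add_distrib, Finset.mul_sum]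
  refine Finset.sum_congr rfl fun k _ => ?_
  linear_combination ((1 / 2 : ℂ) * (p.2 : ℂ) ^ k *
    deriv (c k) ((p.1 : ℂ) + p.2 * Complex.I)) * Complex.I_sq

lemma S_succ_top_zero (m : ℕ) (c : ℕ → ℂ → ℂ) (htop : c (m + 1) = 0) (p : ℝ × ℝ) :
    S (m + 1) c p = S m c p := by
  unfold S
  rw [Finset.sum_range_succ, htop]
  simp

lemma deriv_zero_fun (z : ℂ) : deriv (0 : ℂ → ℂ) z = 0 := by
  rw [show (0 : ℂ → ℂ) = fun _ => (0 : ℂ) from rfl, deriv_const]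

lemma P_wdz {m : ℕ} {G : ℝ × ℝ → ℂ} (h : P m G) : P m (wdz G) := by
  obtain ⟨c, hc, hz, hG⟩ := h
  refine ⟨fun k z => deriv (c k) z - (Complex.I * ((k : ℂ) + 1) / 2) * c (k + 1) z, ?_, ?_, ?_⟩
  · intro k
    have h1 : DifferentiableOn ℂ (deriv (c k)) U :=
      ((hc k).analyticOnNhd isOpen_U).deriv.differentiableOn
    exact h1.sub ((hc (k + 1)).const_mul _)
  · intro k hk
    have h1 : c k = 0 := hz k hk
    have h2 : c (k + 1) = 0 := hz (k + 1) (Nat.lt_succ_of_lt hk)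
    funext z
    simp [h1, h2, deriv_zero_fun]
  · intro p hp
    rw [wdz_congr hG p hp]
    exact wdz_S m c hc hz p hp

lemma P_wdzbar_succ {m : ℕ} {G : ℝ × ℝ → ℂ} (h : P (m + 1) G) : P m (wdzbar G) := by
  obtain ⟨c, hc, hz, hG⟩ := h
  refine ⟨fun k z => (Complex.I * ((k : ℂ) + 1) / 2) * c (k + 1) z, ?_, ?_, ?_⟩
  · intro k
    exact (hc (k + 1)).const_mul _
  · intro k hk
    have h2 : c (k + 1) = 0 := hz (k + 1) (by omega)
    funext z
    simp [h2]
  · intro p hp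
    rw [wdzbar_congr hG p hp, wdzbar_S (m + 1) c hc hz p hp]
    exact S_succ_top_zero m _ (by
      have h2 : c (m + 2) = 0 := hz (m + 2) (by omega)
      funext z
      simp [h2]) p

lemma P_wdzbar_zero {G : ℝ × ℝ → ℂ} (h : P 0 G) :
    ∀ p : ℝ × ℝ, 0 < p.2 → wdzbar G p = 0 := by
  obtain ⟨c, hc, hz, hG⟩ := h
  intro p hp
  rw [wdzbar_congr hG p hp, wdzbar_S 0 c hc hz p hp]
  have h1 : c 1 = 0 := hz 1 (by omega)
  unfold S
  simp [h1]

lemma P_iter_zero : ∀ (m : ℕ) (G : ℝ × ℝ → ℂ), P m G →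
    ∀ p : ℝ × ℝ, 0 < p.2 → (wdzbar^[m + 1] G) p = 0 := by
  intro m
  induction m with
  | zero =>
    intro G h p hp
    simpa using P_wdzbar_zero h p hp
  | succ m ih =>
    intro G h p hp
    rw [Function.iterate_succ_apply]
    exact ih (wdzbar G) (P_wdzbar_succ h) p hp

lemma P_wdz_iter {m : ℕ} {G : ℝ × ℝ → ℂ} (h : P m G) (k : ℕ) : P m (wdz^[k] G) := by
  induction k with
  | zero => simpa using h
  | succ k ih =>
    rw [Function.iterate_succ_apply']
    exact P_wdz ih

lemma P_const_mul {m : ℕ} {G : ℝ × ℝ → ℂ} (a : ℂ) (h : P m G) :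
    P m (fun p => a * G p) := by
  obtain ⟨c, hc, hz, hG⟩ := h
  refine ⟨fun k z => a * c k z, fun k => (hc k).const_mul _, ?_, ?_⟩
  · intro k hk
    funext z
    simp [hz k hk]
  · intro p hp
    show a * G p = _
    rw [hG p hp]
    unfold S
    rw [Finset.mul_sum]
    apply Finset.sum_congr rfl
    intro k _
    ring

lemma P_start (n : ℕ) (F : ℂ → ℂ) (hF : DifferentiableOn ℂ F U) :
    P n (fun r : ℝ × ℝ => (r.2 : ℂ) ^ n * F ((r.1 : ℂ) + r.2 * Complex.I)) := by
  refine ⟨fun k => if k = n then F else 0, ?_, ?_, ?_⟩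
  · intro k
    by_cases hk : k = n
    · simpa [hk] using hF
    · simp only [hk, if_false]
      exact differentiableOn_const 0
  · intro k hk
    simp [Nat.ne_of_gt hk]
  · intro p hp
    unfold S
    rw [Finset.sum_eq_single n]
    · simp
    · intro k hk hkn
      simp [hkn]
    · intro hn
      exact absurd (Finset.self_mem_range_succ n) hn

end Stmt7Aux

/-- If `F` is analytic on the upper half plane, then
`G = (1/((2i)^n n!)) (d/dz)^n [s^n F]` is polyanalytic of order `n+1`. -/
theorem stmt7 (n : ℕ) (F : ℂ → ℂ)
    (hF : DifferentiableOn ℂ F {z : ℂ | 0 < z.im}) :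
    ∀ p : ℝ × ℝ, 0 < p.2 →
      (wdzbar^[n + 1]
        (fun q : ℝ × ℝ =>
          (1 / ((2 * Complex.I) ^ n * (n.factorial : ℂ))) *
            wdz^[n] (fun r : ℝ × ℝ => (r.2 : ℂ) ^ n * F (r.1 + r.2 * Complex.I)) q)) p = 0 := by
  intro p hp
  have h0 : Stmt7Aux.P n (fun r : ℝ × ℝ => (r.2 : ℂ) ^ n * F ((r.1 : ℂ) + r.2 * Complex.I)) :=
    Stmt7Aux.P_start n F hF
  have h1 := Stmt7Aux.P_wdz_iter h0 n
  have h2 := Stmt7Aux.P_const_mul (1 / ((2 * Complex.I) ^ n * (n.factorial : ℂ))) h1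
  exact Stmt7Aux.P_iter_zero n _ h2 p hp
end

section
/- For α > −1 and Re(σ) > 0, ∫₀^∞ x^α L_n^α(x) e^{−xσ} dx = (Γ(α+n+1)/n!) σ^{−α−n−1} (σ−1)^n, where L_n^α is the generalized Laguerre polynomial. -/
open MeasureTheory Complex Finset
open Set Filter

/-- The generalized Laguerre polynomial
`L_n^α(x) = Σ_{k=0}^n (-1)^k C(n+α, n-k) x^k/k!`, where
`C(n+α, n-k) = Γ(α+n+1)/(Γ(α+k+1) (n-k)!)`. -/
noncomputable def laguerreL (n : ℕ) (α : ℝ) (x : ℝ) : ℝ :=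
  ∑ k ∈ Finset.range (n + 1),
    (-1 : ℝ) ^ k *
      (Real.Gamma (α + n + 1) / (Real.Gamma (α + k + 1) * ((n - k).factorial : ℝ))) *
        x ^ k / (k.factorial : ℝ)

lemma aux_int_real {c : ℝ} (hc : -1 < c) {b : ℝ} (hb : 0 < b) :
    IntegrableOn (fun t : ℝ => Real.exp (-(b * t)) * t ^ c) (Set.Ioi 0) := by
  have h := Real.GammaIntegral_convergent (s := c + 1) (by linarith)
  have h2 := (integrableOn_Ioi_comp_mul_left_iff
    (fun x : ℝ => Real.exp (-x) * x ^ (c + 1 - 1)) 0 hb).mpr (by simpa using h)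
  have h3 := h2.const_mul (b ^ (-c))
  rw [IntegrableOn]
  refine h3.congr ?_
  apply (ae_restrict_iff' measurableSet_Ioi).mpr
  filter_upwards with x hx
  have hx0 : (0:ℝ) < x := hx
  simp only [add_sub_cancel_right]
  rw [Real.mul_rpow hb.le hx0.le]
  rw [show b ^ (-c) * (Real.exp (-(b * x)) * (b ^ c * x ^ c))
      = (b ^ (-c) * b ^ c) * (Real.exp (-(b * x)) * x ^ c) by ring,
    ← Real.rpow_add hb]
  simp

lemma aux_meas (a σ : ℂ) :
    AEStronglyMeasurable (fun t : ℝ => (t : ℂ) ^ (a - 1) * Complex.exp (-σ * t))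
      (volume.restrict (Set.Ioi 0)) := by
  refine ContinuousOn.aestronglyMeasurable ?_ measurableSet_Ioi
  refine ContinuousOn.mul ?_ ?_
  · exact continuousOn_of_forall_continuousAt fun x hx =>
      continuousAt_ofReal_cpow_const _ _ (Or.inr (ne_of_gt hx))
  · exact (Complex.continuous_exp.comp (by continuity)).continuousOn

lemma aux_int {a σ : ℂ} (ha : 0 < a.re) (hσ : 0 < σ.re) :
    IntegrableOn (fun t : ℝ => (t : ℂ) ^ (a - 1) * Complex.exp (-σ * t)) (Set.Ioi 0) := by
  refine ⟨aux_meas a σ, ?_⟩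
  rw [← hasFiniteIntegral_norm_iff]
  refine HasFiniteIntegral.congr (aux_int_real (c := a.re - 1) (by linarith) hσ).2 ?_
  apply (ae_restrict_iff' measurableSet_Ioi).mpr
  filter_upwards with x hx
  rw [norm_mul,
    Complex.norm_cpow_eq_rpow_re_of_pos hx, Complex.norm_exp]
  rw [mul_comm]
  congr 1
  simp [Complex.mul_re, mul_comm]

lemma laplace_cpow {a : ℂ} (ha : 0 < a.re) {σ : ℂ} (hσ : 0 < σ.re) :
    ∫ t in Set.Ioi (0:ℝ), (t : ℂ) ^ (a - 1) * Complex.exp (-σ * t)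
      = σ ^ (-a) * Complex.Gamma a := by
  set U : Set ℂ := {z | 0 < z.re} with hUdef
  have hUopen : IsOpen U := isOpen_lt continuous_const Complex.continuous_re
  have hUconn : IsPreconnected U := (convex_halfSpace_re_gt 0).isPreconnected
  set f : ℂ → ℂ := fun z => ∫ t in Set.Ioi (0:ℝ), (t : ℂ) ^ (a - 1) * Complex.exp (-z * t)
    with hfdef
  set g : ℂ → ℂ := fun z => z ^ (-a) * Complex.Gamma a with hgdef
  have hf : AnalyticOnNhd ℂ f U := by
    refine DifferentiableOn.analyticOnNhd (fun z hz => ?_) hUopen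
    have hz' : 0 < z.re := hz
    have hd := hasDerivAt_integral_of_dominated_loc_of_deriv_le
      (F := fun w (t : ℝ) => (t : ℂ) ^ (a - 1) * Complex.exp (-w * t))
      (F' := fun w (t : ℝ) => -((t : ℂ) ^ a * Complex.exp (-w * t)))
      (x₀ := z) (bound := fun t : ℝ => Real.exp (-(z.re / 2 * t)) * t ^ a.re)
      (μ := volume.restrict (Set.Ioi 0))
      (s := Metric.ball z (z.re / 2)) (Metric.ball_mem_nhds z (half_pos hz'))
      (Filter.Eventually.of_forall fun w => aux_meas a w)
      (aux_int ha hz')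
      (by simpa [Pi.neg_def] using (aux_meas (a + 1) z).neg)
      ?_ ?_ ?_
    · exact hd.2.differentiableAt.differentiableWithinAt
    · -- bound
      apply (ae_restrict_iff' measurableSet_Ioi).mpr
      filter_upwards with t ht
      intro w hw
      have ht' : (0:ℝ) < t := ht
      rw [norm_neg, norm_mul,
        Complex.norm_cpow_eq_rpow_re_of_pos ht', Complex.norm_exp, mul_comm]
      have hre : (-w * (t:ℂ)).re = -(w.re * t) := by simp [Complex.mul_re]
      rw [hre]
      refine mul_le_mul_of_nonneg_right ?_ (Real.rpow_nonneg ht'.le _)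
      apply Real.exp_le_exp.mpr
      rw [neg_le_neg_iff]
      refine mul_le_mul_of_nonneg_right ?_ ht'.le
      have := Complex.abs_re_le_norm (w - z)
      have hd' : ‖w - z‖ < z.re / 2 := by
        simpa [Complex.dist_eq] using Metric.mem_ball.mp hw
      have := abs_sub_lt_iff.mp (lt_of_le_of_lt (Complex.abs_re_le_norm (w - z))
        hd')
      linarith [this.2]
    · exact aux_int_real (by linarith) (half_pos hz')
    · -- h_diff
      apply (ae_restrict_iff' measurableSet_Ioi).mpr
      filter_upwards with t ht
      intro w hw
      have ht0 : ((t:ℝ):ℂ) ≠ 0 := Complex.ofReal_ne_zero.mpr (ne_of_gt ht)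
      have h1 : HasDerivAt (fun w : ℂ => -w * t) (-(t:ℂ)) w := by
        simpa using ((hasDerivAt_id w).neg.mul_const (t:ℂ))
      have h3 := (h1.cexp).const_mul ((t:ℂ) ^ (a - 1))
      convert h3 using 1
      · rfl
      rw [show a = a - 1 + 1 by ring, Complex.cpow_add _ _ ht0, Complex.cpow_one]
      ring
  have hg : AnalyticOnNhd ℂ g U := by
    refine DifferentiableOn.analyticOnNhd (fun z hz => ?_) hUopen
    refine (DifferentiableAt.mul_const ?_ _).differentiableWithinAt
    exact (differentiableAt_id.cpow (differentiableAt_const _)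
      (Complex.mem_slitPlane_iff.mpr (Or.inl hz)))
  have key : ∀ r : ℝ, 0 < r → f r = g r := by
    intro r hr
    have h := Complex.integral_cpow_mul_exp_neg_mul_Ioi ha hr
    simp only [hfdef, hgdef]
    simp_rw [neg_mul] at h ⊢
    rw [h, one_div, Complex.inv_cpow _ _ (by
      rw [Complex.arg_ofReal_of_nonneg hr.le]; exact Real.pi_ne_zero.symm),
      ← Complex.cpow_neg]
  have hfreq : ∃ᶠ w in nhdsWithin (1:ℂ) {(1:ℂ)}ᶜ, f w = g w := by
    have htend : Filter.Tendsto (fun m : ℕ => ((1 + ((m:ℝ)+1)⁻¹ : ℝ) : ℂ)) Filter.atTop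
        (nhdsWithin (1:ℂ) {(1:ℂ)}ᶜ) := by
      rw [tendsto_nhdsWithin_iff]
      constructor
      · have h1 : Filter.Tendsto (fun m : ℕ => (1 + ((m:ℝ)+1)⁻¹ : ℝ)) Filter.atTop (nhds 1) := by
          have := tendsto_one_div_add_atTop_nhds_zero_nat (𝕜 := ℝ)
          simp_rw [one_div] at this
          simpa using tendsto_const_nhds.add this
        have h2 := (Complex.continuous_ofReal.tendsto 1).comp h1
        rw [Complex.ofReal_one] at h2
        exact h2
      · refine Filter.Eventually.of_forall fun m => ?_
        simp only [Set.mem_compl_iff, Set.mem_singleton_iff]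
        rw [show (1:ℂ) = ((1:ℝ):ℂ) by norm_num, Complex.ofReal_inj]
        intro h
        have : ((m:ℝ)+1)⁻¹ = 0 := by linarith
        exact (by positivity : ((m:ℝ)+1)⁻¹ ≠ 0) this
    exact htend.frequently (Filter.Frequently.of_forall fun m => key _ (by positivity))
  have := hf.eqOn_of_preconnected_of_frequently_eq hg hUconn
    (show (1:ℂ) ∈ U by simp [hUdef]) hfreq
  exact this (show σ ∈ U from hσ)

/-- `∫₀^∞ x^α L_n^α(x) e^{-xσ} dx = (Γ(α+n+1)/n!) σ^{-α-n-1} (σ-1)^n` for `α > -1`,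
`Re σ > 0`. -/
theorem stmt14 (n : ℕ) (α : ℝ) (hα : -1 < α) (σ : ℂ) (hσ : 0 < σ.re) :
    (∫ x in Set.Ioi (0:ℝ),
        (x : ℂ) ^ (α : ℂ) * (laguerreL n α x : ℂ) * Complex.exp (-x * σ)) =
      ((Complex.Gamma (α + n + 1)) / (n.factorial : ℂ)) *
        σ ^ (-(α : ℂ) - n - 1) * (σ - 1) ^ n := by
  have hσ0 : σ ≠ 0 := fun h => by rw [h] at hσ; simp at hσ
  have hαk : ∀ k : ℕ, (0:ℝ) < α + k + 1 := fun k => by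
    have : (0:ℝ) ≤ k := Nat.cast_nonneg k
    linarith
  have hre : ∀ k : ℕ, 0 < ((α:ℂ) + k + 1).re := fun k => by
    simpa using hαk k
  set c : ℕ → ℂ := fun k => (-1)^k *
    ((Real.Gamma (α+n+1) : ℂ) / ((Real.Gamma (α+k+1):ℂ) * ((n-k).factorial:ℂ)))
      / (k.factorial : ℂ) with hc
  have step1 : ∀ x ∈ Set.Ioi (0:ℝ),
      (x : ℂ) ^ (α : ℂ) * (laguerreL n α x : ℂ) * Complex.exp (-x * σ)
      = ∑ k ∈ range (n+1), c k * ((x:ℂ) ^ (((α:ℂ)+k+1)-1) * Complex.exp (-σ * x)) := by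
    intro x hx
    have hx0 : ((x:ℝ):ℂ) ≠ 0 := Complex.ofReal_ne_zero.mpr (ne_of_gt hx)
    rw [laguerreL]
    push_cast
    rw [Finset.mul_sum, Finset.sum_mul]
    refine Finset.sum_congr rfl fun k hk => ?_
    rw [show ((α:ℂ)+k+1)-1 = (α:ℂ) + k by ring, Complex.cpow_add _ _ hx0,
      Complex.cpow_natCast, show -σ * (x:ℂ) = -(x:ℂ) * σ by ring]
    ring
  rw [setIntegral_congr_fun measurableSet_Ioi step1,
    MeasureTheory.integral_finset_sum _ (fun k _ =>
      ((aux_int (hre k) hσ).const_mul (c k)))]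
  simp_rw [integral_const_mul, laplace_cpow (hre _) hσ]
  have hbinom : (σ - 1)^n = ∑ k ∈ range (n+1), (-1:ℂ)^k * σ^(n-k) * (n.choose k) := by
    have h := add_pow (-1:ℂ) σ n
    rw [show (-1:ℂ) + σ = σ - 1 by ring] at h
    rw [h]
  rw [hbinom, Finset.mul_sum]
  refine Finset.sum_congr rfl fun k hk => ?_
  have hkn : k ≤ n := Nat.lt_succ_iff.mp (Finset.mem_range.mp hk)
  have e1 : ((α:ℂ)+k+1) = ((α+k+1:ℝ):ℂ) := by push_cast; ring
  have e2 : ((α:ℂ)+(n:ℂ)+1) = ((α+n+1:ℝ):ℂ) := by push_cast; ring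
  rw [e1, e2, Complex.Gamma_ofReal, Complex.Gamma_ofReal,
    show -(((α+k+1:ℝ)):ℂ) = (-(α:ℂ)-n-1) + ((n-k : ℕ):ℂ) by
      push_cast [Nat.cast_sub hkn]; ring,
    Complex.cpow_add _ _ hσ0, Complex.cpow_natCast]
  have hG1 : (Real.Gamma (α+k+1) : ℂ) ≠ 0 :=
    Complex.ofReal_ne_zero.mpr (Real.Gamma_pos_of_pos (hαk k)).ne'
  have hkf : ((k.factorial:ℂ)) ≠ 0 := Nat.cast_ne_zero.mpr k.factorial_ne_zero
  have hnkf : (((n-k).factorial:ℂ)) ≠ 0 := Nat.cast_ne_zero.mpr (n-k).factorial_ne_zero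
  have hnf : ((n.factorial:ℂ)) ≠ 0 := Nat.cast_ne_zero.mpr n.factorial_ne_zero
  have hch : ((n.choose k : ℂ)) * (k.factorial:ℂ) * ((n-k).factorial:ℂ) = (n.factorial:ℂ) := by
    exact_mod_cast congrArg (Nat.cast : ℕ → ℂ) (Nat.choose_mul_factorial_mul_factorial hkn)
  have hcoef : c k * (Real.Gamma (α+k+1) : ℂ)
      = (Real.Gamma (α+n+1):ℂ) / (n.factorial:ℂ) * ((-1:ℂ)^k * (n.choose k : ℂ)) := by
    rw [hc]
    field_simp
    linear_combination (-(Real.Gamma (α+n+1):ℂ)) * hch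
  linear_combination (σ ^ (-(α:ℂ)-(n:ℂ)-1) * σ^(n-k)) * hcoef
end
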